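/- For every execution ρ of an event-driven program and all get events g₁, g₂ of the same handler in the induced trace τ(ρ): if g₁ qo g₂ then g₁ eo g₂. In particular, τ(ρ) contains no pair of get events g₁, g₂ with g₁ qo g₂ and g₂ hb g₁. -/

import Mathlib

/-!
Common framework for event-driven (ED) traces.

Handlers, shared variables and values are modelled as natural numbers;
events are (abstract) natural-number identifiers carrying a label.
-/

/-- Labels of events of event-driven programs: a read `⟨h,read,x⟩`, a write
`⟨h,write,x,v⟩`, a post `⟨h,post,h′⟩` or a get `⟨h,get⟩` of a handler `h`. -/
inductive EventLabel : Type where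
  | read  (h x : ℕ)
  | write (h x v : ℕ)
  | post  (h h' : ℕ)
  | get   (h : ℕ)
deriving DecidableEq

/-- The six basic relations of an ED trace. -/
inductive EDRel : Type where
  | po | rf | co | pb | mo | eo
deriving DecidableEq

/-- The handler of an event. -/
def EventLabel.hnd : EventLabel → ℕ
  | .read h _    => h
  | .write h _ _ => h
  | .post h _    => h
  | .get h       => h

def EventLabel.IsGet (l : EventLabel) : Prop := ∃ h, l = .get h
def EventLabel.IsPost (l : EventLabel) : Prop := ∃ h h', l = .post h h'
/-- `l` is a write event on variable `x`. -/
def EventLabel.IsWriteTo (l : EventLabel) (x : ℕ) : Prop := ∃ h v, l = .write h x v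
/-- `l` is a read event on variable `x`. -/
def EventLabel.IsReadOf (l : EventLabel) (x : ℕ) : Prop := ∃ h, l = .read h x
/-- `l` is a post event posting to handler `h'`. -/
def EventLabel.PostsTo (l : EventLabel) (h' : ℕ) : Prop := ∃ h, l = .post h h'

/-- An event-driven trace: a finite set `E` of events (natural-number
identifiers), a labelling of events, and a family of labelled edges. -/
structure EDTrace : Type where
  E : Finset ℕ
  lbl : ℕ → EventLabel
  rel : EDRel → ℕ → ℕ → Prop

namespace EDTrace

/-- The from-read relation `fr = rf⁻¹ ; co`. -/
def fr (τ : EDTrace) (a b : ℕ) : Prop := ∃ w, τ.rel .rf w a ∧ τ.rel .co w b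

/-- The queue order `qo = pb⁻¹ ; mo ; pb` on get events. -/
def qo (τ : EDTrace) (a b : ℕ) : Prop :=
  ∃ p q, τ.rel .pb p a ∧ τ.rel .pb q b ∧ τ.rel .mo p q

/-- `e` belongs to the (non-initial) message whose get event is `g`:
`g` is a get event and `e` is po-reachable from `g`. -/
def InMsg (τ : EDTrace) (g e : ℕ) : Prop :=
  (τ.lbl g).IsGet ∧ Relation.ReflTransGen (τ.rel .po) g e

/-- `eo†`: every event of a message is related to every event of an
eo-later message of the same handler. -/
def eoDag (τ : EDTrace) (a b : ℕ) : Prop :=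
  ∃ g g', τ.InMsg g a ∧ τ.InMsg g' b ∧ τ.rel .eo g g'

/-- One step of the happens-before relation:
`po ∪ rf ∪ fr ∪ co ∪ pb ∪ mo ∪ eo† ∪ qo`. -/
def step (τ : EDTrace) (a b : ℕ) : Prop :=
  τ.rel .po a b ∨ τ.rel .rf a b ∨ τ.fr a b ∨ τ.rel .co a b ∨
  τ.rel .pb a b ∨ τ.rel .mo a b ∨ τ.eoDag a b ∨ τ.qo a b

/-- The happens-before relation: transitive closure of
`po ∪ rf ∪ fr ∪ co ∪ pb ∪ mo ∪ eo† ∪ qo`. -/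
def hb (τ : EDTrace) : ℕ → ℕ → Prop := Relation.TransGen τ.step

/-- Axiomatic consistency: acyclicity of `po ∪ rf ∪ fr ∪ co ∪ pb ∪ mo ∪ eo† ∪ qo`. -/
def Consistent (τ : EDTrace) : Prop := ∀ e, ¬ τ.hb e e

/-- `e` belongs to the initial message of its handler: it belongs to no
message started by a get event. -/
def InInit (τ : EDTrace) (e : ℕ) : Prop :=
  e ∈ τ.E ∧ ¬ ∃ g ∈ τ.E, τ.InMsg g e

/-- Two events belong to the same message (either the message of a common
get event, or both to the initial message of the same handler). -/
def SameMsg (τ : EDTrace) (a b : ℕ) : Prop :=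
  (∃ g ∈ τ.E, τ.InMsg g a ∧ τ.InMsg g b) ∨
  (τ.InInit a ∧ τ.InInit b ∧ (τ.lbl a).hnd = (τ.lbl b).hnd)

/-- Well-formedness of the `po, rf, co, pb` components of a trace. -/
structure WFCore (τ : EDTrace) : Prop where
  edges_mem : ∀ r a b, τ.rel r a b → a ∈ τ.E ∧ b ∈ τ.E
  po_trans : Transitive (τ.rel .po)
  po_irrefl : ∀ a, ¬ τ.rel .po a a
  po_same_handler : ∀ a b, τ.rel .po a b → (τ.lbl a).hnd = (τ.lbl b).hnd
  po_msg : ∀ a b, τ.rel .po a b → τ.SameMsg a b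
  po_total : ∀ a ∈ τ.E, ∀ b ∈ τ.E, τ.SameMsg a b → a ≠ b →
    τ.rel .po a b ∨ τ.rel .po b a
  rf_lbl : ∀ a b, τ.rel .rf a b → ∃ x, (τ.lbl a).IsWriteTo x ∧ (τ.lbl b).IsReadOf x
  rf_unique : ∀ b ∈ τ.E, (∃ x, (τ.lbl b).IsReadOf x) → ∃! a, τ.rel .rf a b
  co_lbl : ∀ a b, τ.rel .co a b → ∃ x, (τ.lbl a).IsWriteTo x ∧ (τ.lbl b).IsWriteTo x
  co_trans : Transitive (τ.rel .co)
  co_irrefl : ∀ a, ¬ τ.rel .co a a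
  co_total : ∀ x, ∀ a ∈ τ.E, ∀ b ∈ τ.E, (τ.lbl a).IsWriteTo x → (τ.lbl b).IsWriteTo x →
    a ≠ b → τ.rel .co a b ∨ τ.rel .co b a
  pb_lbl : ∀ a b, τ.rel .pb a b → ∃ h h', τ.lbl a = .post h h' ∧ τ.lbl b = .get h'
  pb_get : ∀ b ∈ τ.E, (τ.lbl b).IsGet → ∃! a, τ.rel .pb a b
  pb_post : ∀ a ∈ τ.E, (τ.lbl a).IsPost → ∃! b, τ.rel .pb a b

/-- Well-formedness of a (total) ED trace: additionally `mo` totally orders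
the posts to each handler and `eo` totally orders the gets of each handler. -/
structure WF (τ : EDTrace) extends WFCore τ : Prop where
  mo_lbl : ∀ a b, τ.rel .mo a b → ∃ h', (τ.lbl a).PostsTo h' ∧ (τ.lbl b).PostsTo h'
  mo_trans : Transitive (τ.rel .mo)
  mo_irrefl : ∀ a, ¬ τ.rel .mo a a
  mo_total : ∀ h', ∀ a ∈ τ.E, ∀ b ∈ τ.E, (τ.lbl a).PostsTo h' → (τ.lbl b).PostsTo h' →
    a ≠ b → τ.rel .mo a b ∨ τ.rel .mo b a
  eo_lbl : ∀ a b, τ.rel .eo a b → ∃ h, τ.lbl a = .get h ∧ τ.lbl b = .get h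
  eo_trans : Transitive (τ.rel .eo)
  eo_irrefl : ∀ a, ¬ τ.rel .eo a a
  eo_total : ∀ h, ∀ a ∈ τ.E, ∀ b ∈ τ.E, τ.lbl a = .get h → τ.lbl b = .get h →
    a ≠ b → τ.rel .eo a b ∨ τ.rel .eo b a

/-- A partial trace: the `eo` and `mo` components are omitted (empty). -/
def IsPartial (τ : EDTrace) : Prop :=
  (∀ a b, ¬ τ.rel .eo a b) ∧ (∀ a b, ¬ τ.rel .mo a b)

/-- `τ'` extends the (partial) trace `τ`: same events, labels and
`po, rf, co, pb` edges; only `eo` and `mo` may be added. -/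
def Extends (τ' τ : EDTrace) : Prop :=
  τ'.E = τ.E ∧ τ'.lbl = τ.lbl ∧ τ'.rel .po = τ.rel .po ∧ τ'.rel .rf = τ.rel .rf ∧
  τ'.rel .co = τ.rel .co ∧ τ'.rel .pb = τ.rel .pb

/-- ED-consistency of a partial trace: it can be extended, by adding `eo`
edges (total per handler) and `mo` edges (total per target handler), to a
well-formed axiomatically consistent trace. -/
def EDConsistent (τ : EDTrace) : Prop :=
  ∃ τ' : EDTrace, Extends τ' τ ∧ τ'.WF ∧ τ'.Consistent

end EDTrace
/-!
Operational semantics of event-driven programs: handler threads with FIFO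
mailboxes, shared variables under sequential consistency, and messages whose
instructions are executed sequentially; `post` enqueues a message at the tail
of the target handler's mailbox, `get` dequeues the message at the head.
-/

/-- Instructions of a message: reads and writes of shared variables, and
posting of a (nested) message to a handler's mailbox. -/
inductive Instr : Type where
  | read  (x : ℕ)
  | write (x v : ℕ)
  | post  (h' : ℕ) (m : List Instr)

/-- A message is a sequence of instructions. -/
abbrev Msg := List Instr

/-- An event-driven program: finitely many handler threads, each with an
initial message. -/
structure Program : Type where
  numHandlers : ℕ
  init : ℕ → Msg

/-- A configuration: shared memory, per handler the currently executing
message (its identifier and remaining instructions), the FIFO mailbox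
(head = front of the queue) and a supply of fresh message identifiers. -/
structure Config : Type where
  mem  : ℕ → ℕ
  cur  : ℕ → Option (ℕ × Msg)
  mbox : ℕ → List (ℕ × Msg)
  fresh : ℕ

/-- A run event: its label together with the identifier of the message it
belongs to and, for post events, the identifier of the posted message. -/
structure REvent : Type where
  lbl : EventLabel
  mid : ℕ
  posted : ℕ

/-- Small-step transitions of event-driven programs, labelled by events. -/
inductive Step : Config → REvent → Config → Prop where
  | read (c : Config) (h mid x : ℕ) (rest : Msg) :
      c.cur h = some (mid, .read x :: rest) →
      Step c ⟨.read h x, mid, 0⟩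
        { c with cur := Function.update c.cur h (some (mid, rest)) }
  | write (c : Config) (h mid x v : ℕ) (rest : Msg) :
      c.cur h = some (mid, .write x v :: rest) →
      Step c ⟨.write h x v, mid, 0⟩
        { c with mem := Function.update c.mem x v,
                 cur := Function.update c.cur h (some (mid, rest)) }
  | post (c : Config) (h mid h' : ℕ) (m : Msg) (rest : Msg) :
      c.cur h = some (mid, .post h' m :: rest) →
      Step c ⟨.post h h', mid, c.fresh⟩
        { c with cur := Function.update c.cur h (some (mid, rest)),
                 mbox := Function.update c.mbox h' (c.mbox h' ++ [(c.fresh, m)]),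
                 fresh := c.fresh + 1 }
  | get (c : Config) (h mid mid' : ℕ) (m : Msg) (q : List (ℕ × Msg)) :
      c.cur h = some (mid, []) →
      c.mbox h = (mid', m) :: q →
      Step c ⟨.get h, mid', 0⟩
        { c with cur := Function.update c.cur h (some (mid', m)),
                 mbox := Function.update c.mbox h q }

/-- The initial configuration of a program: all variables 0, every handler
executing its initial message, all mailboxes empty. -/
def initConfig (P : Program) : Config where
  mem := fun _ => 0
  cur := fun h => if h < P.numHandlers then some (h, P.init h) else none
  mbox := fun _ => []
  fresh := P.numHandlers

/-- Multi-step executions producing a sequence of events. -/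
inductive Steps : Config → List REvent → Config → Prop where
  | nil (c : Config) : Steps c [] c
  | cons {c c' c'' : Config} {e : REvent} {l : List REvent} :
      Step c e c' → Steps c' l c'' → Steps c (e :: l) c''

/-- `ρ` is an execution of the program `P`. -/
def IsExec (P : Program) (ρ : List REvent) : Prop :=
  ∃ c, Steps (initConfig P) ρ c

/-- The event of `ρ` at position `i`. -/
def evAt (ρ : List REvent) (i : ℕ) : REvent := ρ.getD i ⟨.get 0, 0, 0⟩

/-- The trace `τ(ρ)` induced by an execution `ρ`: events are the positions of
`ρ`, and the relations `po, rf, co, pb, mo, eo` are determined by the order of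
execution in `ρ`. -/
def traceOf (ρ : List REvent) : EDTrace where
  E := Finset.range ρ.length
  lbl := fun i => (evAt ρ i).lbl
  rel := fun r a b =>
    a < b ∧ b < ρ.length ∧
    match r with
    | .po => (evAt ρ a).mid = (evAt ρ b).mid
    | .rf => ∃ x, (evAt ρ a).lbl.IsWriteTo x ∧ (evAt ρ b).lbl.IsReadOf x ∧
        ∀ j, a < j → j < b → ¬ (evAt ρ j).lbl.IsWriteTo x
    | .co => ∃ x, (evAt ρ a).lbl.IsWriteTo x ∧ (evAt ρ b).lbl.IsWriteTo x
    | .pb => (evAt ρ a).lbl.IsPost ∧ (evAt ρ b).lbl.IsGet ∧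
        (evAt ρ a).posted = (evAt ρ b).mid
    | .mo => ∃ h', (evAt ρ a).lbl.PostsTo h' ∧ (evAt ρ b).lbl.PostsTo h'
    | .eo => ∃ h, (evAt ρ a).lbl = .get h ∧ (evAt ρ b).lbl = .get h

/-!
The events of `traceOf ρ` are the positions of `ρ`, and every happens-before step goes forward
in execution order: `po`, `rf`, `co`, `pb`, `mo` by definition, `fr` because a read sees the
latest earlier write, `eo†` because a handler finishes a message before its next get, and `qo`
because `qo ⊆ eo`. The last holds since message identifiers are allocated in increasing order
and mailboxes are FIFO, so each handler dequeues its messages in the order they were posted.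
Hence `qo g₁ g₂` gives `g₁ < g₂`, while `hb g₂ g₁` would give `g₂ < g₁`.
-/

namespace List

variable {α β : Type*}

theorem filterMap_cons_eq_toList_append (f : α → Option β) (a : α) (l : List α) :
    (a :: l).filterMap f = (f a).toList ++ l.filterMap f := by
  rw [filterMap_cons]
  cases f a <;> rfl

theorem getLast?_filterMap_cons (f : α → Option β) (a : α) (l : List α) :
    ((a :: l).filterMap f).getLast? = (l.filterMap f).getLast?.or (f a) := by
  rw [filterMap_cons_eq_toList_append, getLast?_append]
  cases f a <;> rfl

theorem Pairwise.rel_of_filterMap {R : β → β → Prop} {f : α → Option β} {l : List α}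
    (h : (l.filterMap f).Pairwise R) {i j : ℕ} (hij : i < j) (hj : j < l.length) {b b' : β}
    (hb : f l[i] = some b) (hb' : f l[j] = some b') : R b b' :=
  pairwise_iff_getElem.1 (pairwise_filterMap.1 h) i j (hij.trans hj) hj hij b hb b' hb'

theorem pairwise_filterMap_of_getElem {R : β → β → Prop} {f : α → Option β} {l : List α}
    (h : ∀ i j (hi : i < l.length) (hj : j < l.length), i < j →
      ∀ b, f l[i] = some b → ∀ b', f l[j] = some b' → R b b') :
    (l.filterMap f).Pairwise R :=
  pairwise_filterMap.2 (pairwise_iff_getElem.2 h)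

theorem Pairwise.le_of_getLast?_eq [Preorder α] {l : List α} (h : l.Pairwise (· < ·))
    {x y : α} (hx : x ∈ l) (hy : l.getLast? = some y) : x ≤ y := by
  obtain ⟨l', rfl⟩ := getLast?_eq_some_iff.1 hy
  rcases mem_append.1 hx with hx | hx
  · exact (pairwise_append.1 h).2.2 x hx y (mem_singleton_self y) |>.le
  · exact (mem_singleton.1 hx).le

end List

theorem evAt_eq_getElem {l : List REvent} {i : ℕ} (h : i < l.length) : evAt l i = l[i] := by
  simp [evAt, List.getD_eq_getElem?_getD, h]

theorem evAt_take {l : List REvent} {n i : ℕ} (h : i < n) : evAt (l.take n) i = evAt l i := by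
  simp [evAt, List.getD_eq_getElem?_getD, List.getElem?_take_of_lt h]

theorem evAt_cons_zero (e : REvent) (l : List REvent) : evAt (e :: l) 0 = e := rfl

theorem evAt_cons_succ (e : REvent) (l : List REvent) (n : ℕ) :
    evAt (e :: l) (n + 1) = evAt l n := rfl

def REvent.getMid? (h : ℕ) (e : REvent) : Option ℕ :=
  if e.lbl = .get h then some e.mid else none

def REvent.postedTo? (h : ℕ) (e : REvent) : Option ℕ :=
  match e.lbl with
  | .post _ h' => if h' = h then some e.posted else none
  | _ => none

def getsOf (h : ℕ) (l : List REvent) : List ℕ := l.filterMap (REvent.getMid? h)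

def postsTo (h : ℕ) (l : List REvent) : List ℕ := l.filterMap (REvent.postedTo? h)

theorem REvent.getMid?_eq_some {h : ℕ} {e : REvent} (he : e.lbl = .get h) :
    e.getMid? h = some e.mid := by
  simp [getMid?, he]

theorem REvent.postedTo?_eq_some_iff {h m : ℕ} {e : REvent} :
    e.postedTo? h = some m ↔ (∃ h₀, e.lbl = .post h₀ h) ∧ e.posted = m := by
  unfold postedTo?
  split <;> simp_all [eq_comm]

theorem REvent.postedTo?_eq_some {h₀ h : ℕ} {e : REvent} (he : e.lbl = .post h₀ h) :
    e.postedTo? h = some e.posted :=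
  postedTo?_eq_some_iff.2 ⟨⟨h₀, he⟩, rfl⟩

namespace Step

variable {c c' : Config} {e : REvent}

theorem fresh_le (hs : Step c e c') : c.fresh ≤ c'.fresh := by
  cases hs <;> simp

theorem posted_eq_fresh (hs : Step c e c') (hp : e.lbl.IsPost) :
    e.posted = c.fresh ∧ c'.fresh = c.fresh + 1 := by
  obtain ⟨_, _, hl⟩ := hp
  cases hs <;> simp_all

theorem mbox_fifo (hs : Step c e c') (h : ℕ) :
    (e.getMid? h).toList ++ (c'.mbox h).map Prod.fst =
      (c.mbox h).map Prod.fst ++ (e.postedTo? h).toList := by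
  cases hs with
  | get h₀ _ mid' m q _ hq =>
    by_cases hh : h₀ = h
    · subst hh; simp [REvent.getMid?, REvent.postedTo?, hq]
    · simp [REvent.getMid?, REvent.postedTo?, hh, Function.update_of_ne (Ne.symm hh)]
  | post _ _ h' =>
    by_cases hh : h' = h
    · subst hh; simp [REvent.getMid?, REvent.postedTo?]
    · simp [REvent.getMid?, REvent.postedTo?, hh, Function.update_of_ne (Ne.symm hh)]
  | _ => simp [REvent.getMid?, REvent.postedTo?]

theorem cur_mid (hs : Step c e c') (h : ℕ) :
    (c'.cur h).map Prod.fst = (e.getMid? h).or ((c.cur h).map Prod.fst) := by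
  cases hs with
  | get h₀ =>
    by_cases hh : h₀ = h
    · subst hh; simp [REvent.getMid?]
    · simp [REvent.getMid?, hh, Function.update_of_ne (Ne.symm hh)]
  | read h₀ _ _ _ hc | write h₀ _ _ _ _ hc | post h₀ _ _ _ _ hc =>
    by_cases hh : h₀ = h
    · subst hh; simp [REvent.getMid?, hc]
    · simp [REvent.getMid?, Function.update_of_ne (Ne.symm hh)]

theorem cur_mid_self (hs : Step c e c') : (c'.cur e.lbl.hnd).map Prod.fst = some e.mid := by
  cases hs <;> simp [EventLabel.hnd]

end Step

namespace Steps

variable {c c' : Config} {l : List REvent}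

theorem fresh_le_posted (hs : Steps c l c') {i : ℕ} (hi : i < l.length)
    (hp : (evAt l i).lbl.IsPost) : c.fresh ≤ (evAt l i).posted := by
  induction hs generalizing i with
  | nil => simp at hi
  | cons h₁ _ ih =>
    cases i with
    | zero => exact (h₁.posted_eq_fresh hp).1.ge
    | succ n => exact h₁.fresh_le.trans (ih (by simpa using hi) hp)

theorem posted_lt_posted (hs : Steps c l c') {i j : ℕ} (hij : i < j) (hj : j < l.length)
    (hpi : (evAt l i).lbl.IsPost) (hpj : (evAt l j).lbl.IsPost) :
    (evAt l i).posted < (evAt l j).posted := by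
  induction hs generalizing i j with
  | nil => simp at hj
  | cons h₁ h₂ ih =>
    obtain ⟨j, rfl⟩ : ∃ j', j = j' + 1 := Nat.exists_eq_succ_of_ne_zero (by omega)
    cases i with
    | zero =>
      obtain ⟨hpost, hfresh⟩ := h₁.posted_eq_fresh hpi
      have hlater := h₂.fresh_le_posted (by simpa using hj) hpj
      simp only [evAt_cons_zero, evAt_cons_succ] at hpost hlater ⊢
      omega
    | succ i => exact ih (by omega) (by simpa using hj) hpi hpj

theorem eq_of_posted_eq (hs : Steps c l c') {i j : ℕ} (hi : i < l.length) (hj : j < l.length)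
    (hpi : (evAt l i).lbl.IsPost) (hpj : (evAt l j).lbl.IsPost)
    (heq : (evAt l i).posted = (evAt l j).posted) : i = j := by
  rcases lt_trichotomy i j with h | h | h
  · exact absurd heq (hs.posted_lt_posted h hj hpi hpj).ne
  · exact h
  · exact absurd heq (hs.posted_lt_posted h hi hpj hpi).ne'

theorem postsTo_pairwise (hs : Steps c l c') (h : ℕ) : (postsTo h l).Pairwise (· < ·) :=
  List.pairwise_filterMap_of_getElem fun i j hi hj hij b hb b' hb' => by
    rw [← evAt_eq_getElem hi] at hb
    rw [← evAt_eq_getElem hj] at hb'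
    obtain ⟨⟨_, hpi⟩, rfl⟩ := REvent.postedTo?_eq_some_iff.1 hb
    obtain ⟨⟨_, hpj⟩, rfl⟩ := REvent.postedTo?_eq_some_iff.1 hb'
    exact hs.posted_lt_posted hij hj ⟨_, _, hpi⟩ ⟨_, _, hpj⟩

theorem mbox_fifo (hs : Steps c l c') (h : ℕ) :
    getsOf h l ++ (c'.mbox h).map Prod.fst = (c.mbox h).map Prod.fst ++ postsTo h l := by
  induction hs with
  | nil => simp [getsOf, postsTo]
  | cons h₁ _ ih =>
    simp only [getsOf, postsTo, List.filterMap_cons_eq_toList_append] at ih ⊢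
    rw [List.append_assoc, ih, ← List.append_assoc, h₁.mbox_fifo h, List.append_assoc]

/-- An event belongs to the message most recently dequeued by its handler, or to the
message its handler was executing at the start. -/
theorem some_mid_eq (hs : Steps c l c') {i : ℕ} (hi : i < l.length) :
    some (evAt l i).mid = (getsOf (evAt l i).lbl.hnd (l.take (i + 1))).getLast?.or
      ((c.cur (evAt l i).lbl.hnd).map Prod.fst) := by
  induction hs generalizing i with
  | nil => simp at hi
  | cons h₁ _ ih =>
    cases i with
    | zero =>
      rw [evAt_cons_zero, ← h₁.cur_mid_self, h₁.cur_mid]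
      simp [getsOf]
    | succ i =>
      rw [evAt_cons_succ, List.take_succ_cons, ih (by simpa using hi), h₁.cur_mid, getsOf,
        getsOf, List.getLast?_filterMap_cons, Option.or_assoc]

end Steps

theorem mem_getsOf {l : List REvent} {i h : ℕ} (hi : i < l.length)
    (hl : (evAt l i).lbl = .get h) : (evAt l i).mid ∈ getsOf h l :=
  List.mem_filterMap.2
    ⟨_, by rw [evAt_eq_getElem hi]; exact List.getElem_mem hi, REvent.getMid?_eq_some hl⟩

theorem mem_postsTo {l : List REvent} {i h₀ h : ℕ} (hi : i < l.length)
    (hl : (evAt l i).lbl = .post h₀ h) : (evAt l i).posted ∈ postsTo h l :=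
  List.mem_filterMap.2
    ⟨_, by rw [evAt_eq_getElem hi]; exact List.getElem_mem hi, REvent.postedTo?_eq_some hl⟩

theorem exists_of_mem_postsTo {l : List REvent} {h m : ℕ} (hm : m ∈ postsTo h l) :
    ∃ i < l.length, (∃ h₀, (evAt l i).lbl = .post h₀ h) ∧ (evAt l i).posted = m := by
  obtain ⟨e, he, hfe⟩ := List.mem_filterMap.1 hm
  obtain ⟨i, hi, rfl⟩ := List.mem_iff_getElem.1 he
  exact ⟨i, hi, by rw [evAt_eq_getElem hi]; exact REvent.postedTo?_eq_some_iff.1 hfe⟩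

section Run

variable {P : Program} {ρ : List REvent} {cf : Config}

theorem getsOf_prefix_postsTo (hρ : Steps (initConfig P) ρ cf) (h : ℕ) :
    getsOf h ρ <+: postsTo h ρ :=
  ⟨_, by simpa [initConfig] using hρ.mbox_fifo h⟩

theorem getsOf_pairwise (hρ : Steps (initConfig P) ρ cf) (h : ℕ) :
    (getsOf h ρ).Pairwise (· < ·) :=
  (hρ.postsTo_pairwise h).sublist (getsOf_prefix_postsTo hρ h).sublist

theorem getsOf_take_pairwise (hρ : Steps (initConfig P) ρ cf) (h n : ℕ) :
    (getsOf h (ρ.take n)).Pairwise (· < ·) :=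
  (getsOf_pairwise hρ h).sublist ((List.take_sublist n ρ).filterMap _)

theorem mid_lt_mid_of_get (hρ : Steps (initConfig P) ρ cf) {i j h : ℕ} (hij : i < j)
    (hj : j < ρ.length) (hi_get : (evAt ρ i).lbl = .get h) (hj_get : (evAt ρ j).lbl = .get h) :
    (evAt ρ i).mid < (evAt ρ j).mid := by
  rw [evAt_eq_getElem (hij.trans hj)] at hi_get ⊢
  rw [evAt_eq_getElem hj] at hj_get ⊢
  exact (getsOf_pairwise hρ h).rel_of_filterMap hij hj
    (REvent.getMid?_eq_some hi_get) (REvent.getMid?_eq_some hj_get)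

theorem mem_postsTo_of_get (hρ : Steps (initConfig P) ρ cf) {i h : ℕ} (hi : i < ρ.length)
    (hl : (evAt ρ i).lbl = .get h) : (evAt ρ i).mid ∈ postsTo h ρ :=
  (getsOf_prefix_postsTo hρ h).subset (mem_getsOf hi hl)

theorem eq_of_mem_postsTo (hρ : Steps (initConfig P) ρ cf) {h h' m : ℕ}
    (hm : m ∈ postsTo h ρ) (hm' : m ∈ postsTo h' ρ) : h = h' := by
  obtain ⟨i, hi, ⟨_, hli⟩, rfl⟩ := exists_of_mem_postsTo hm
  obtain ⟨j, hj, ⟨_, hlj⟩, hji⟩ := exists_of_mem_postsTo hm'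
  obtain rfl := hρ.eq_of_posted_eq hj hi ⟨_, _, hlj⟩ ⟨_, _, hli⟩ hji
  rw [hli] at hlj
  exact (EventLabel.post.inj hlj).2

theorem numHandlers_le_of_mem_postsTo (hρ : Steps (initConfig P) ρ cf) {h m : ℕ}
    (hm : m ∈ postsTo h ρ) : P.numHandlers ≤ m := by
  obtain ⟨i, hi, ⟨_, hli⟩, rfl⟩ := exists_of_mem_postsTo hm
  exact hρ.fresh_le_posted hi ⟨_, _, hli⟩

/-- If `g' ≤ a`, then by `Steps.some_mid_eq` the identifier `mid a = mid g` is the last one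
dequeued by the handler of `a` up to `a`: it is not an initial identifier (those are
`< numHandlers`), so that handler is `h`, whose dequeued identifiers increase, and `g'` already
dequeued `mid g' > mid g`. -/
theorem lt_later_get_of_mid_eq (hρ : Steps (initConfig P) ρ cf) {g g' a h : ℕ} (hgg' : g < g')
    (ha : a < ρ.length) (hg : (evAt ρ g).lbl = .get h) (hg' : (evAt ρ g').lbl = .get h)
    (hmid : (evAt ρ a).mid = (evAt ρ g).mid) : a < g' := by
  by_contra! hle
  have hg'_len : g' < ρ.length := hle.trans_lt ha
  have hmid_lt := mid_lt_mid_of_get hρ hgg' hg'_len hg hg'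
  have hg_posted := mem_postsTo_of_get hρ (hgg'.trans hg'_len) hg
  have hcur := hρ.some_mid_eq ha
  cases hlast : (getsOf (evAt ρ a).lbl.hnd (ρ.take (a + 1))).getLast? with
  | none =>
    have hN := numHandlers_le_of_mem_postsTo hρ hg_posted
    rw [hlast, Option.none_or] at hcur
    simp only [initConfig] at hcur
    split at hcur
    · rw [Option.map_some, Option.some_inj] at hcur
      omega
    · simp at hcur
  | some m =>
    rw [hlast, Option.some_or, Option.some_inj] at hcur
    have hm_posts : m ∈ postsTo (evAt ρ a).lbl.hnd ρ :=
      (getsOf_prefix_postsTo hρ _).subset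
        (((List.take_sublist _ ρ).filterMap _).subset (List.mem_of_getLast? hlast))
    have hk := eq_of_mem_postsTo hρ hm_posts (hcur ▸ hmid ▸ hg_posted)
    rw [hk] at hlast
    have hg'_mem : (evAt ρ g').mid ∈ getsOf h (ρ.take (a + 1)) := by
      have hg'_take : g' < (ρ.take (a + 1)).length := by rw [List.length_take]; omega
      rw [← evAt_take (Nat.lt_succ_of_le hle)] at hg' ⊢
      exact mem_getsOf hg'_take hg'
    have := (getsOf_take_pairwise hρ h (a + 1)).le_of_getLast?_eq hg'_mem hlast
    omega

theorem traceOf_qo_eo (hρ : Steps (initConfig P) ρ cf) {a b : ℕ} (hqo : (traceOf ρ).qo a b) :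
    (traceOf ρ).rel .eo a b := by
  obtain ⟨p, q, ⟨-, ha, hp, ⟨ha_hnd, ha_get⟩, hpa⟩, ⟨-, hb, hq, ⟨hb_hnd, hb_get⟩, hqb⟩,
    hpq, hq_len, h, ⟨_, hp_to⟩, ⟨_, hq_to⟩⟩ := hqo
  have hmid : (evAt ρ a).mid < (evAt ρ b).mid := hpa ▸ hqb ▸ hρ.posted_lt_posted hpq hq_len hp hq
  obtain rfl : ha_hnd = h := eq_of_mem_postsTo hρ (mem_postsTo_of_get hρ ha ha_get)
    (hpa ▸ mem_postsTo (hpq.trans hq_len) hp_to)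
  obtain rfl : hb_hnd = ha_hnd := eq_of_mem_postsTo hρ (mem_postsTo_of_get hρ hb hb_get)
    (hqb ▸ mem_postsTo hq_len hq_to)
  refine ⟨?_, hb, _, ha_get, hb_get⟩
  by_contra! hba
  rcases hba.lt_or_eq with hba | rfl
  · exact (mid_lt_mid_of_get hρ hba ha hb_get ha_get).not_gt hmid
  · exact hmid.false

theorem traceOf_po_reflTransGen {a b : ℕ}
    (h : Relation.ReflTransGen ((traceOf ρ).rel .po) a b) :
    a = b ∨ (a < b ∧ b < ρ.length ∧ (evAt ρ a).mid = (evAt ρ b).mid) := by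
  induction h with
  | refl => exact Or.inl rfl
  | tail _ hbc ih =>
    obtain ⟨hbc, hc, hmid⟩ := hbc
    rcases ih with rfl | ⟨hab, -, hmid'⟩
    · exact Or.inr ⟨hbc, hc, hmid⟩
    · exact Or.inr ⟨hab.trans hbc, hc, hmid'.trans hmid⟩

theorem traceOf_fr_lt {a b : ℕ} (hfr : (traceOf ρ).fr a b) : a < b := by
  obtain ⟨w, ⟨-, -, x, ⟨_, _, hw⟩, ⟨_, ha_read⟩, hno_write⟩, ⟨hwb, -, x', ⟨_, _, hw'⟩, hb_write⟩⟩ :=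
    hfr
  obtain rfl : x = x' := (EventLabel.write.inj (hw.symm.trans hw')).2.1
  by_contra! hba
  rcases hba.lt_or_eq with hba | rfl
  · exact hno_write b hwb hba hb_write
  · obtain ⟨_, _, ha_write⟩ := hb_write
    rw [ha_read] at ha_write
    cases ha_write

theorem traceOf_eoDag_lt (hρ : Steps (initConfig P) ρ cf) {a b : ℕ}
    (heo : (traceOf ρ).eoDag a b) : a < b := by
  obtain ⟨g, g', ⟨-, hga⟩, ⟨-, hg'b⟩, hgg', -, h, hg, hg'⟩ := heo
  have hag' : a < g' := by
    rcases traceOf_po_reflTransGen hga with rfl | ⟨-, ha, hmid⟩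
    · exact hgg'
    · exact lt_later_get_of_mid_eq hρ hgg' ha hg hg' hmid.symm
  rcases traceOf_po_reflTransGen hg'b with rfl | ⟨hg'b, -⟩
  · exact hag'
  · exact hag'.trans hg'b

theorem traceOf_step_lt (hρ : Steps (initConfig P) ρ cf) {a b : ℕ}
    (h : (traceOf ρ).step a b) : a < b := by
  rcases h with h | h | h | h | h | h | h | h
  · exact h.1
  · exact h.1
  · exact traceOf_fr_lt h
  · exact h.1
  · exact h.1
  · exact h.1
  · exact traceOf_eoDag_lt hρ h
  · exact (traceOf_qo_eo hρ h).1

theorem traceOf_hb_lt (hρ : Steps (initConfig P) ρ cf) {a b : ℕ} (h : (traceOf ρ).hb a b) :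
    a < b := by
  induction h with
  | single h => exact traceOf_step_lt hρ h
  | tail _ h ih => exact ih.trans (traceOf_step_lt hρ h)

end Run

theorem statement3_general (P : Program) (ρ : List REvent) (hexec : IsExec P ρ)
    (g₁ g₂ : ℕ) :
    ((traceOf ρ).qo g₁ g₂ → (traceOf ρ).rel .eo g₁ g₂) ∧
    ¬ ((traceOf ρ).qo g₁ g₂ ∧ (traceOf ρ).hb g₂ g₁) := by
  obtain ⟨cf, hρ⟩ := hexec
  exact ⟨traceOf_qo_eo hρ, fun ⟨hqo, hhb⟩ =>
    lt_asymm (traceOf_qo_eo hρ hqo).1 (traceOf_hb_lt hρ hhb)⟩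

/-- For every execution `ρ` of an event-driven program and
all get events `g₁, g₂` of the same handler in the induced trace `τ(ρ)`:
if `g₁ qo g₂` then `g₁ eo g₂`; in particular `τ(ρ)` contains no pair of get
events with `g₁ qo g₂` and `g₂ hb g₁`. -/
theorem statement3 (P : Program) (ρ : List REvent) (hexec : IsExec P ρ)
    (g₁ g₂ : ℕ) (hg₁ : g₁ ∈ (traceOf ρ).E) (hg₂ : g₂ ∈ (traceOf ρ).E)
    (hget₁ : ((traceOf ρ).lbl g₁).IsGet) (hget₂ : ((traceOf ρ).lbl g₂).IsGet)
    (hsame : ((traceOf ρ).lbl g₁).hnd = ((traceOf ρ).lbl g₂).hnd) :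
    ((traceOf ρ).qo g₁ g₂ → (traceOf ρ).rel .eo g₁ g₂) ∧
    ¬ ((traceOf ρ).qo g₁ g₂ ∧ (traceOf ρ).hb g₂ g₁) :=
  statement3_general P ρ hexec g₁ g₂
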